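/- (Definite-direction exactness.) Suppose H₁,…,H_m ∈ S^n are all positive semidefinite, or all negative semidefinite. Then G(δ) = H₀ + Σ δ_i H_i ⪰ 0 for all δ ∈ [-1,1]^m if and only if there exist a degree-≤2 SOS polynomial matrix S₀ and positive semidefinite S₁,…,S_m ∈ S^n with G(δ) = S₀(δ) + Σ (1-δ_i²)S_i identically. In particular one may take S_i = (1/2)Q_i with Q_i = ±H_i ⪰ 0 and S₀(δ) = G(δ) - (1/2)Σ(1-δ_i²)Q_i. -/

import Mathlib

/-!
If every `δ ∈ [-1, 1]^m` makes `G(δ) = H₀ + ∑ δᵢ Hᵢ` positive semidefinite and `Qᵢ = ε Hᵢ ⪰ 0`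
for a fixed sign `ε`, then the vertex value `G(-ε, …, -ε) = H₀ - ∑ Qᵢ` is positive semidefinite,
and the scalar identity `(x + ε)² / 2 + (1 - x²) / 2 = 1 + ε x` (valid as `ε² = 1`) gives
`G(x) = (H₀ - ∑ Qᵢ) + ∑ (xᵢ + ε)² Qᵢ / 2 + ∑ (1 - xᵢ²) Qᵢ / 2`, an SOS matrix of degree two plus
the multiplier terms with `Sᵢ = Qᵢ / 2`. Conversely, evaluating such an identity at `δ` writes
`G(δ)` as `T(δ) T(δ)ᵀ` plus nonnegative multiples `1 - δᵢ²` of the `Sᵢ`.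
-/

open Matrix MvPolynomial

/-- A symmetric polynomial matrix `S` is a sum of squares if `S = T * Tᵀ`
for some polynomial matrix `T`. -/
def IsSOSMatrix {n m : ℕ} (S : Matrix (Fin n) (Fin n) (MvPolynomial (Fin m) ℝ)) : Prop :=
  ∃ (q : ℕ) (T : Matrix (Fin n) (Fin q) (MvPolynomial (Fin m) ℝ)), S = T * Tᵀ

variable {n m : ℕ}

namespace IsSOSMatrix

theorem zero : IsSOSMatrix (0 : Matrix (Fin n) (Fin n) (MvPolynomial (Fin m) ℝ)) :=
  ⟨0, 0, by simp⟩

theorem add {A B : Matrix (Fin n) (Fin n) (MvPolynomial (Fin m) ℝ)}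
    (hA : IsSOSMatrix A) (hB : IsSOSMatrix B) : IsSOSMatrix (A + B) := by
  obtain ⟨p, T, rfl⟩ := hA
  obtain ⟨q, U, rfl⟩ := hB
  refine ⟨p + q, of fun a => Fin.append (T a) (U a), ?_⟩
  ext a b
  simp [mul_apply, Fin.sum_univ_add]

theorem sum {ι : Type*} (s : Finset ι) {A : ι → Matrix (Fin n) (Fin n) (MvPolynomial (Fin m) ℝ)}
    (hA : ∀ i ∈ s, IsSOSMatrix (A i)) : IsSOSMatrix (∑ i ∈ s, A i) := by
  induction s using Finset.cons_induction with
  | empty => simpa using zero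
  | cons a s has ih =>
    rw [Finset.sum_cons]
    exact (hA a (s.mem_cons_self a)).add (ih fun i hi => hA i (Finset.mem_cons_of_mem hi))

open scoped MatrixOrder Matrix.Norms.L2Operator in
theorem sq_smul_map_C {A : Matrix (Fin n) (Fin n) ℝ} (hA : A.PosSemidef)
    (p : MvPolynomial (Fin m) ℝ) :
    IsSOSMatrix (p ^ 2 • A.map (C : ℝ → MvPolynomial (Fin m) ℝ)) := by
  obtain ⟨B, rfl⟩ := CStarAlgebra.nonneg_iff_eq_star_mul_self.mp hA.nonneg
  refine ⟨n, p • (Bᵀ).map C, ?_⟩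
  rw [transpose_smul, ← transpose_map, transpose_transpose, smul_mul_smul_comm, ← sq,
    ← Matrix.map_mul (f := (C : ℝ →+* MvPolynomial (Fin m) ℝ))]
  simp [star_eq_conjTranspose]

theorem map_C {A : Matrix (Fin n) (Fin n) ℝ} (hA : A.PosSemidef) :
    IsSOSMatrix (A.map (C : ℝ → MvPolynomial (Fin m) ℝ)) := by
  simpa using sq_smul_map_C hA 1

theorem posSemidef_map_eval {S : Matrix (Fin n) (Fin n) (MvPolynomial (Fin m) ℝ)}
    (hS : IsSOSMatrix S) (δ : Fin m → ℝ) : (S.map (eval δ)).PosSemidef := by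
  obtain ⟨q, T, rfl⟩ := hS
  rw [Matrix.map_mul (f := eval δ), transpose_map, ← conjTranspose_eq_transpose_of_trivial]
  exact posSemidef_self_mul_conjTranspose _

end IsSOSMatrix

theorem totalDegree_map_C_add_sum_sq_smul_apply_le (G : Matrix (Fin n) (Fin n) ℝ)
    (S : Fin m → Matrix (Fin n) (Fin n) ℝ) {p : Fin m → MvPolynomial (Fin m) ℝ}
    (hp : ∀ i, (p i).totalDegree ≤ 1) (a b : Fin n) :
    ((G.map C + ∑ i, p i ^ 2 • (S i).map C :
        Matrix (Fin n) (Fin n) (MvPolynomial (Fin m) ℝ)) a b).totalDegree ≤ 2 := by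
  simp only [Matrix.add_apply, Matrix.sum_apply, Matrix.smul_apply, map_apply, smul_eq_mul,
    mul_comm _ (C _), ← smul_eq_C_mul]
  refine (totalDegree_add _ _).trans
    (max_le (by simp [totalDegree_C]) (totalDegree_finsetSum_le fun i _ => ?_))
  calc _ ≤ (p i ^ 2).totalDegree := totalDegree_smul_le _ _
    _ ≤ 2 * (p i).totalDegree := totalDegree_pow _ _
    _ ≤ 2 := by have := hp i; omega

noncomputable def polyPencil (H₀ : Matrix (Fin n) (Fin n) ℝ)
    (H : Fin m → Matrix (Fin n) (Fin n) ℝ) : Matrix (Fin n) (Fin n) (MvPolynomial (Fin m) ℝ) :=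
  H₀.map C + ∑ i, (X i : MvPolynomial (Fin m) ℝ) • (H i).map C

def HasSOSCertificate (H₀ : Matrix (Fin n) (Fin n) ℝ) (H : Fin m → Matrix (Fin n) (Fin n) ℝ) :
    Prop :=
  ∃ (S₀ : Matrix (Fin n) (Fin n) (MvPolynomial (Fin m) ℝ)) (S : Fin m → Matrix (Fin n) (Fin n) ℝ),
    IsSOSMatrix S₀ ∧ (∀ a b, (S₀ a b).totalDegree ≤ 2) ∧ (∀ i, (S i).PosSemidef) ∧
      polyPencil H₀ H = S₀ + ∑ i, (1 - X i ^ 2 : MvPolynomial (Fin m) ℝ) • (S i).map C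

theorem posSemidef_of_polyPencil_eq {H₀ : Matrix (Fin n) (Fin n) ℝ}
    {H : Fin m → Matrix (Fin n) (Fin n) ℝ} {S₀ : Matrix (Fin n) (Fin n) (MvPolynomial (Fin m) ℝ)}
    {S : Fin m → Matrix (Fin n) (Fin n) ℝ} (hS₀ : IsSOSMatrix S₀) (hS : ∀ i, (S i).PosSemidef)
    (h : polyPencil H₀ H = S₀ + ∑ i, (1 - X i ^ 2 : MvPolynomial (Fin m) ℝ) • (S i).map C)
    (δ : Fin m → ℝ) (hδ : ∀ i, |δ i| ≤ 1) : (H₀ + ∑ i, δ i • H i).PosSemidef := by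
  have h_eval : H₀ + ∑ i, δ i • H i = S₀.map (eval δ) + ∑ i, (1 - δ i ^ 2) • S i := by
    ext a b
    simpa [polyPencil, Matrix.sum_apply] using congrFun₂ (congrArg (·.map (eval δ)) h) a b
  rw [h_eval]
  refine (hS₀.posSemidef_map_eval δ).add (posSemidef_sum _ fun i _ => (hS i).smul ?_)
  exact sub_nonneg.2 ((sq_le_one_iff_abs_le_one _).2 (hδ i))

theorem polyPencil_eq_sos_add {ε : ℝ} (hε : ε ^ 2 = 1) (H₀ : Matrix (Fin n) (Fin n) ℝ)
    (H : Fin m → Matrix (Fin n) (Fin n) ℝ) :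
    polyPencil H₀ H =
      ((H₀ + ∑ i, (-ε) • H i).map C + ∑ i, (X i + C ε) ^ 2 • ((2⁻¹ : ℝ) • ε • H i).map C) +
        ∑ i, (1 - X i ^ 2 : MvPolynomial (Fin m) ℝ) • ((2⁻¹ : ℝ) • ε • H i).map C := by
  have hC : (C ε : MvPolynomial (Fin m) ℝ) ^ 2 = 1 := by rw [← map_pow, hε, map_one]
  have hC2 : (C 2⁻¹ : MvPolynomial (Fin m) ℝ) * 2 = 1 := by
    rw [← map_ofNat C 2, ← map_mul]; norm_num
  refine Matrix.ext fun a b => ?_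
  simp only [polyPencil, Matrix.add_apply, Matrix.sum_apply, Matrix.smul_apply, map_apply,
    smul_eq_mul, map_add, map_sum, map_mul, map_neg]
  have h_term : ∀ i, X i * C (H i a b) = -C ε * C (H i a b) +
      ((X i + C ε) ^ 2 * (C 2⁻¹ * (C ε * C (H i a b))) +
        (1 - X i ^ 2) * (C 2⁻¹ * (C ε * C (H i a b)))) := fun i => by
    linear_combination (-(X i * C (H i a b)) - C 2⁻¹ * C ε * C (H i a b)) * hC
      - (X i * C (H i a b) * C ε ^ 2 + C ε * C (H i a b)) * hC2
  rw [Finset.sum_congr rfl fun i _ => h_term i]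
  simp only [Finset.sum_add_distrib]
  ring

theorem hasSOSCertificate_of_posSemidef {ε : ℝ} (hε : |ε| = 1) {H₀ : Matrix (Fin n) (Fin n) ℝ}
    {H : Fin m → Matrix (Fin n) (Fin n) ℝ} (hQ : ∀ i, (ε • H i).PosSemidef)
    (hG : (H₀ + ∑ i, (-ε) • H i).PosSemidef) : HasSOSCertificate H₀ H := by
  have hS : ∀ i, ((2⁻¹ : ℝ) • ε • H i).PosSemidef := fun i => (hQ i).smul (by norm_num)
  refine ⟨_, _, ?_, ?_, hS, polyPencil_eq_sos_add (by rw [← sq_abs, hε, one_pow]) H₀ H⟩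
  · exact (IsSOSMatrix.map_C hG).add
      (IsSOSMatrix.sum _ fun i _ => IsSOSMatrix.sq_smul_map_C (hS i) _)
  · exact totalDegree_map_C_add_sum_sq_smul_apply_le _ _ fun i =>
      (totalDegree_add (X i) (C ε)).trans (by simp [totalDegree_X, totalDegree_C])

theorem definite_direction_exactness_general {n m : ℕ}
    (H₀ : Matrix (Fin n) (Fin n) ℝ) (H : Fin m → Matrix (Fin n) (Fin n) ℝ)
    (hdef : (∀ i, (H i).PosSemidef) ∨ (∀ i, (-(H i)).PosSemidef)) :
    (∀ δ : Fin m → ℝ, (∀ i, |δ i| ≤ 1) → (H₀ + ∑ i : Fin m, δ i • H i).PosSemidef) ↔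
      ∃ (S₀ : Matrix (Fin n) (Fin n) (MvPolynomial (Fin m) ℝ))
        (S : Fin m → Matrix (Fin n) (Fin n) ℝ),
        IsSOSMatrix S₀ ∧ (∀ a b, (S₀ a b).totalDegree ≤ 2) ∧
        (∀ i, (S i).PosSemidef) ∧
        H₀.map MvPolynomial.C +
            ∑ i : Fin m, (MvPolynomial.X i : MvPolynomial (Fin m) ℝ) • (H i).map MvPolynomial.C =
          S₀ + ∑ i : Fin m,
            ((1 : MvPolynomial (Fin m) ℝ) - MvPolynomial.X i ^ 2) • (S i).map MvPolynomial.C := by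
  refine ⟨fun hG => ?_, fun ⟨S₀, S, hS₀, _, hS, h⟩ => posSemidef_of_polyPencil_eq hS₀ hS h⟩
  obtain ⟨ε, hε, hQ⟩ : ∃ ε : ℝ, |ε| = 1 ∧ ∀ i, (ε • H i).PosSemidef :=
    hdef.elim (fun h => ⟨1, abs_one, by simpa using h⟩) (fun h => ⟨-1, by simp, by simpa using h⟩)
  exact hasSOSCertificate_of_posSemidef hε hQ (hG _ fun _ => (abs_neg ε).trans_le hε.le)

theorem definite_direction_exactness {n m : ℕ}
    (H₀ : Matrix (Fin n) (Fin n) ℝ) (H : Fin m → Matrix (Fin n) (Fin n) ℝ)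
    (h0 : H₀.IsSymm) (hH : ∀ i, (H i).IsSymm)
    (hdef : (∀ i, (H i).PosSemidef) ∨ (∀ i, (-(H i)).PosSemidef)) :
    (∀ δ : Fin m → ℝ, (∀ i, |δ i| ≤ 1) → (H₀ + ∑ i : Fin m, δ i • H i).PosSemidef) ↔
      ∃ (S₀ : Matrix (Fin n) (Fin n) (MvPolynomial (Fin m) ℝ))
        (S : Fin m → Matrix (Fin n) (Fin n) ℝ),
        IsSOSMatrix S₀ ∧ (∀ a b, (S₀ a b).totalDegree ≤ 2) ∧
        (∀ i, (S i).PosSemidef) ∧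
        H₀.map MvPolynomial.C +
            ∑ i : Fin m, (MvPolynomial.X i : MvPolynomial (Fin m) ℝ) • (H i).map MvPolynomial.C =
          S₀ + ∑ i : Fin m,
            ((1 : MvPolynomial (Fin m) ℝ) - MvPolynomial.X i ^ 2) • (S i).map MvPolynomial.C :=
  definite_direction_exactness_general H₀ H hdef
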